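/- Let V be an n-dimensional real vector space (n ≥ 3) with a nondegenerate symmetric bilinear form g, let R be an algebraic curvature tensor on V with Ricci tensor S, and let L be a real number. Then: (a) R·R = L·Q(g,R) if and only if (R − L·G)·(R − L·G) = 0; and (b) R·S = L·Q(g,S) if and only if (R − L·G)·(S − L·g) = 0. -/
import Mathlib


noncomputable section

open scoped BigOperators

variable {n : ℕ}

/-- Components of the inverse Gram matrix `g^{ij}`. -/
def ginvA (g : Fin n → Fin n → ℝ) (i j : Fin n) : ℝ := (Matrix.of g)⁻¹ i j

/-- The Ricci tensor `S(Y,Z) = g^{ij} R(eᵢ,Y,Z,eⱼ)` of an algebraic curvature tensor. -/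
def ricciA (g : Fin n → Fin n → ℝ) (R : Fin n → Fin n → Fin n → Fin n → ℝ)
    (i j : Fin n) : ℝ :=
  ∑ r, ∑ s, ginvA g r s * R r i j s

/-- The scalar curvature `κ = g^{ij} S_{ij}`. -/
def scalarA (g : Fin n → Fin n → ℝ) (R : Fin n → Fin n → Fin n → Fin n → ℝ) : ℝ :=
  ∑ i, ∑ j, ginvA g i j * ricciA g R i j

/-- The Kulkarni–Nomizu product of two symmetric (0,2)-tensors. -/
def knA (A B : Fin n → Fin n → ℝ) (X1 X2 X3 X4 : Fin n) : ℝ :=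
  A X1 X4 * B X2 X3 + A X2 X3 * B X1 X4 - A X1 X3 * B X2 X4 - A X2 X4 * B X1 X3

/-- The Gaussian curvature tensor `G = (1/2) g ∧ g`. -/
def GA (g : Fin n → Fin n → ℝ) (i j k l : Fin n) : ℝ := (1/2) * knA g g i j k l

/-- The Weyl tensor `C = R − (1/(n−2)) g∧S + (κ/((n−2)(n−1))) G`. -/
def weylA (g : Fin n → Fin n → ℝ) (R : Fin n → Fin n → Fin n → Fin n → ℝ)
    (h i j k : Fin n) : ℝ :=
  R h i j k - (1/((n:ℝ)-2)) * knA g (ricciA g R) h i j k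
    + (scalarA g R / (((n:ℝ)-2)*((n:ℝ)-1))) * GA g h i j k

/-- The conharmonic tensor `conh(R) = R − (1/(n−2)) g∧S`. -/
def conhA (g : Fin n → Fin n → ℝ) (R : Fin n → Fin n → Fin n → Fin n → ℝ)
    (h i j k : Fin n) : ℝ :=
  R h i j k - (1/((n:ℝ)-2)) * knA g (ricciA g R) h i j k

/-- The (0,6)-tensor `T·T'`: the curvature-type tensor `T` acts as a derivation,
through the endomorphisms `𝒯(X,Y)` with `g(𝒯(X,Y)Z,W) = T(X,Y,Z,W)`, on `T'`. -/
def dot44A (g : Fin n → Fin n → ℝ) (T T' : Fin n → Fin n → Fin n → Fin n → ℝ)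
    (h i j k l m : Fin n) : ℝ :=
  -(∑ r, ∑ s, ginvA g r s *
    (T l m h s * T' r i j k + T l m i s * T' h r j k
      + T l m j s * T' h i r k + T l m k s * T' h i j r))

/-- The (0,4)-tensor `T·A` for a curvature-type tensor `T` acting on a (0,2)-tensor `A`. -/
def dot42A (g : Fin n → Fin n → ℝ) (T : Fin n → Fin n → Fin n → Fin n → ℝ)
    (A : Fin n → Fin n → ℝ) (i j l m : Fin n) : ℝ :=
  -(∑ r, ∑ s, ginvA g r s * (T l m i s * A r j + T l m j s * A i r))

/-- The Tachibana tensor `Q(A,T')` of a symmetric (0,2)-tensor and a (0,4)-tensor. -/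
def tach4A (A : Fin n → Fin n → ℝ) (T' : Fin n → Fin n → Fin n → Fin n → ℝ)
    (h i j k l m : Fin n) : ℝ :=
  -((A m h * T' l i j k - A l h * T' m i j k)
    + (A m i * T' h l j k - A l i * T' h m j k)
    + (A m j * T' h i l k - A l j * T' h i m k)
    + (A m k * T' h i j l - A l k * T' h i j m))

/-- The Tachibana tensor `Q(A,B)` of two (0,2)-tensors. -/
def tach2A (A B : Fin n → Fin n → ℝ) (i j l m : Fin n) : ℝ :=
  -((A m i * B l j - A l i * B m j) + (A m j * B i l - A l j * B i m))

section AuxLemmas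

variable {N : ℕ}

lemma GA_eq (g : Fin N → Fin N → ℝ) (a b c d : Fin N) :
    GA g a b c d = g a d * g b c - g a c * g b d := by
  simp only [GA, knA]; ring

lemma GA_antisym (g : Fin N → Fin N → ℝ) (a b c d : Fin N) :
    GA g a b c d = - GA g a b d c := by
  simp only [GA_eq]; ring

variable (g : Fin N → Fin N → ℝ)

open Matrix in
lemma ginv_symm (hgsym : ∀ i j, g i j = g j i) (r s : Fin N) : ginvA g r s = ginvA g s r := by
  have ht : (Matrix.of g)ᵀ = Matrix.of g := by
    ext i j; exact hgsym j i
  have h := Matrix.transpose_nonsing_inv (Matrix.of g)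
  rw [ht] at h
  show (Matrix.of g)⁻¹ r s = (Matrix.of g)⁻¹ s r
  conv_lhs => rw [← h]
  exact Matrix.transpose_apply _ r s

lemma hdelta (hgsym : ∀ i j, g i j = g j i) (hgdet : (Matrix.of g).det ≠ 0) (a r : Fin N) :
    ∑ s, ginvA g r s * g a s = if r = a then (1:ℝ) else 0 := by
  have h1 : (Matrix.of g)⁻¹ * Matrix.of g = 1 :=
    Matrix.nonsing_inv_mul _ (isUnit_iff_ne_zero.mpr hgdet)
  have h2 := congrFun (congrFun h1 r) a
  rw [Matrix.mul_apply, Matrix.one_apply] at h2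
  calc ∑ s, ginvA g r s * g a s
      = ∑ s, (Matrix.of g)⁻¹ r s * Matrix.of g s a := by
        refine Finset.sum_congr rfl fun s _ => ?_
        show ginvA g r s * g a s = (Matrix.of g)⁻¹ r s * g s a
        rw [hgsym a s]; rfl
    _ = _ := h2

lemma c1 (hgsym : ∀ i j, g i j = g j i) (hgdet : (Matrix.of g).det ≠ 0) (a : Fin N) (f : Fin N → ℝ) :
    ∑ r, ∑ s, ginvA g r s * (g a s * f r) = f a := by
  have e : ∀ r : Fin N,
      ∑ s, ginvA g r s * (g a s * f r) = (if r = a then (1:ℝ) else 0) * f r := by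
    intro r
    calc ∑ s, ginvA g r s * (g a s * f r)
        = (∑ s, ginvA g r s * g a s) * f r := by
          rw [Finset.sum_mul]
          exact Finset.sum_congr rfl fun s _ => (mul_assoc _ _ _).symm
      _ = _ := by rw [hdelta g hgsym hgdet a r]
  rw [Finset.sum_congr rfl fun r _ => e r]
  simp [ite_mul, Finset.sum_ite_eq']

lemma c3 (hgsym : ∀ i j, g i j = g j i) (hgdet : (Matrix.of g).det ≠ 0) (a : Fin N) (f : Fin N → ℝ) :
    ∑ r, ∑ s, ginvA g r s * (g a r * f s) = f a := by
  rw [Finset.sum_comm]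
  refine (Finset.sum_congr rfl fun s _ => Finset.sum_congr rfl fun r _ => ?_).trans
    (c1 g hgsym hgdet a f)
  rw [ginv_symm g hgsym r s]

lemma c4 (hgsym : ∀ i j, g i j = g j i) (hgdet : (Matrix.of g).det ≠ 0) (a : Fin N) (f : Fin N → ℝ) :
    ∑ r, ∑ s, ginvA g r s * (g r a * f s) = f a := by
  refine (Finset.sum_congr rfl fun r _ => Finset.sum_congr rfl fun s _ => ?_).trans
    (c3 g hgsym hgdet a f)
  rw [hgsym r a]

lemma dot44_G_left (hgsym : ∀ i j, g i j = g j i) (hgdet : (Matrix.of g).det ≠ 0) (T : Fin N → Fin N → Fin N → Fin N → ℝ) (h i j k l m : Fin N) :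
    dot44A g (GA g) T h i j k l m = tach4A g T h i j k l m := by
  simp only [dot44A]
  have e : (∑ r, ∑ s, ginvA g r s *
        (GA g l m h s * T r i j k + GA g l m i s * T h r j k
          + GA g l m j s * T h i r k + GA g l m k s * T h i j r))
      = ∑ r, ∑ s,
        (ginvA g r s * (g l s * (g m h * T r i j k))
          - ginvA g r s * (g m s * (g l h * T r i j k))
          + ginvA g r s * (g l s * (g m i * T h r j k))
          - ginvA g r s * (g m s * (g l i * T h r j k))
          + ginvA g r s * (g l s * (g m j * T h i r k))
          - ginvA g r s * (g m s * (g l j * T h i r k))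
          + ginvA g r s * (g l s * (g m k * T h i j r))
          - ginvA g r s * (g m s * (g l k * T h i j r))) := by
    refine Finset.sum_congr rfl fun r _ => Finset.sum_congr rfl fun s _ => ?_
    simp only [GA_eq]; ring
  rw [e]
  simp only [Finset.sum_add_distrib, Finset.sum_sub_distrib]
  rw [c1 g hgsym hgdet l (fun r => g m h * T r i j k),
      c1 g hgsym hgdet m (fun r => g l h * T r i j k),
      c1 g hgsym hgdet l (fun r => g m i * T h r j k),
      c1 g hgsym hgdet m (fun r => g l i * T h r j k),
      c1 g hgsym hgdet l (fun r => g m j * T h i r k),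
      c1 g hgsym hgdet m (fun r => g l j * T h i r k),
      c1 g hgsym hgdet l (fun r => g m k * T h i j r),
      c1 g hgsym hgdet m (fun r => g l k * T h i j r)]
  simp only [tach4A]; ring

lemma dot44_G_right (hgsym : ∀ i j, g i j = g j i) (hgdet : (Matrix.of g).det ≠ 0) (T : Fin N → Fin N → Fin N → Fin N → ℝ)
    (hT : ∀ a b c d, T a b c d = - T a b d c) (h i j k l m : Fin N) :
    dot44A g T (GA g) h i j k l m = 0 := by
  simp only [dot44A]
  have e : (∑ r, ∑ s, ginvA g r s *
        (T l m h s * GA g r i j k + T l m i s * GA g h r j k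
          + T l m j s * GA g h i r k + T l m k s * GA g h i j r))
      = ∑ r, ∑ s,
        (ginvA g r s * (g r k * (g i j * T l m h s))
          - ginvA g r s * (g r j * (g i k * T l m h s))
          + ginvA g r s * (g r j * (g h k * T l m i s))
          - ginvA g r s * (g r k * (g h j * T l m i s))
          + ginvA g r s * (g i r * (g h k * T l m j s))
          - ginvA g r s * (g h r * (g i k * T l m j s))
          + ginvA g r s * (g h r * (g i j * T l m k s))
          - ginvA g r s * (g i r * (g h j * T l m k s))) := by
    refine Finset.sum_congr rfl fun r _ => Finset.sum_congr rfl fun s _ => ?_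
    simp only [GA_eq]; ring
  rw [e]
  simp only [Finset.sum_add_distrib, Finset.sum_sub_distrib]
  rw [c4 g hgsym hgdet k (fun s => g i j * T l m h s),
      c4 g hgsym hgdet j (fun s => g i k * T l m h s),
      c4 g hgsym hgdet j (fun s => g h k * T l m i s),
      c4 g hgsym hgdet k (fun s => g h j * T l m i s),
      c3 g hgsym hgdet i (fun s => g h k * T l m j s),
      c3 g hgsym hgdet h (fun s => g i k * T l m j s),
      c3 g hgsym hgdet h (fun s => g i j * T l m k s),
      c3 g hgsym hgdet i (fun s => g h j * T l m k s)]
  rw [hT l m k h, hT l m j i, hT l m j h, hT l m k i]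
  ring

lemma dot42_G_left (hgsym : ∀ i j, g i j = g j i) (hgdet : (Matrix.of g).det ≠ 0) (A : Fin N → Fin N → ℝ) (i j l m : Fin N) :
    dot42A g (GA g) A i j l m = tach2A g A i j l m := by
  simp only [dot42A]
  have e : (∑ r, ∑ s, ginvA g r s * (GA g l m i s * A r j + GA g l m j s * A i r))
      = ∑ r, ∑ s,
        (ginvA g r s * (g l s * (g m i * A r j))
          - ginvA g r s * (g m s * (g l i * A r j))
          + ginvA g r s * (g l s * (g m j * A i r))
          - ginvA g r s * (g m s * (g l j * A i r))) := by
    refine Finset.sum_congr rfl fun r _ => Finset.sum_congr rfl fun s _ => ?_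
    simp only [GA_eq]; ring
  rw [e]
  simp only [Finset.sum_add_distrib, Finset.sum_sub_distrib]
  rw [c1 g hgsym hgdet l (fun r => g m i * A r j),
      c1 g hgsym hgdet m (fun r => g l i * A r j),
      c1 g hgsym hgdet l (fun r => g m j * A i r),
      c1 g hgsym hgdet m (fun r => g l j * A i r)]
  simp only [tach2A]; ring

lemma dot42_g_right (hgsym : ∀ i j, g i j = g j i) (hgdet : (Matrix.of g).det ≠ 0) (T : Fin N → Fin N → Fin N → Fin N → ℝ)
    (hT : ∀ a b c d, T a b c d = - T a b d c) (i j l m : Fin N) :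
    dot42A g T g i j l m = 0 := by
  simp only [dot42A]
  have e : (∑ r, ∑ s, ginvA g r s * (T l m i s * g r j + T l m j s * g i r))
      = ∑ r, ∑ s,
        (ginvA g r s * (g r j * T l m i s) + ginvA g r s * (g i r * T l m j s)) := by
    refine Finset.sum_congr rfl fun r _ => Finset.sum_congr rfl fun s _ => ?_
    ring
  rw [e]
  simp only [Finset.sum_add_distrib]
  rw [c4 g hgsym hgdet j (fun s => T l m i s), c3 g hgsym hgdet i (fun s => T l m j s)]
  rw [hT l m j i]
  ring

lemma neg_sum_expand (F A B C D : Fin N → Fin N → ℝ) (L : ℝ)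
    (hF : ∀ r s, F r s = A r s - L * B r s - L * C r s + L^2 * D r s) :
    -(∑ r, ∑ s, F r s) = -(∑ r, ∑ s, A r s) - L * -(∑ r, ∑ s, B r s)
      - L * -(∑ r, ∑ s, C r s) + L^2 * -(∑ r, ∑ s, D r s) := by
  have h1 : (∑ r, ∑ s, F r s)
      = ∑ r, ∑ s, (A r s - L * B r s - L * C r s + L^2 * D r s) :=
    Finset.sum_congr rfl fun r _ => Finset.sum_congr rfl fun s _ => hF r s
  rw [h1]
  simp only [Finset.sum_add_distrib, Finset.sum_sub_distrib, ← Finset.mul_sum]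
  ring

end AuxLemmas

/-- For an algebraic curvature tensor `R` on an `n`-dimensional real
vector space (`n ≥ 3`) with nondegenerate symmetric bilinear form `g`, and `L : ℝ`:
(a) `R·R = L·Q(g,R)` iff `(R − L·G)·(R − L·G) = 0`;
(b) `R·S = L·Q(g,S)` iff `(R − L·G)·(S − L·g) = 0`. -/
theorem pseudosymmetry_equivalences {n : ℕ} (hn : 3 ≤ n)
    (g : Fin n → Fin n → ℝ) (hgsym : ∀ i j, g i j = g j i)
    (hgdet : (Matrix.of g).det ≠ 0)
    (R : Fin n → Fin n → Fin n → Fin n → ℝ)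
    (hanti : ∀ X Y Z W, R X Y Z W = - R Y X Z W)
    (hpair : ∀ X Y Z W, R X Y Z W = R Z W X Y)
    (hbianchi : ∀ X Y Z W, R X Y Z W + R Y Z X W + R Z X Y W = 0)
    (L : ℝ) :
    ((∀ h i j k l m : Fin n,
        dot44A g R R h i j k l m = L * tach4A g R h i j k l m)
      ↔ (∀ h i j k l m : Fin n,
        dot44A g (fun X Y Z W => R X Y Z W - L * GA g X Y Z W)
          (fun X Y Z W => R X Y Z W - L * GA g X Y Z W) h i j k l m = 0)) ∧
    ((∀ i j l m : Fin n,
        dot42A g R (ricciA g R) i j l m = L * tach2A g (ricciA g R) i j l m)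
      ↔ (∀ i j l m : Fin n,
        dot42A g (fun X Y Z W => R X Y Z W - L * GA g X Y Z W)
          (fun p q => ricciA g R p q - L * g p q) i j l m = 0)) := by
  have hRlast : ∀ a b c d, R a b c d = - R a b d c := by
    intro a b c d
    calc R a b c d = R c d a b := hpair a b c d
      _ = - R d c a b := hanti c d a b
      _ = - R a b d c := by rw [← hpair d c a b]
  have master44 : ∀ h i j k l m : Fin n,
      dot44A g (fun X Y Z W => R X Y Z W - L * GA g X Y Z W)
        (fun X Y Z W => R X Y Z W - L * GA g X Y Z W) h i j k l m
      = dot44A g R R h i j k l m - L * tach4A g R h i j k l m := by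
    intro h i j k l m
    have E : dot44A g (fun X Y Z W => R X Y Z W - L * GA g X Y Z W)
        (fun X Y Z W => R X Y Z W - L * GA g X Y Z W) h i j k l m
        = dot44A g R R h i j k l m - L * dot44A g (GA g) R h i j k l m
          - L * dot44A g R (GA g) h i j k l m
          + L^2 * dot44A g (GA g) (GA g) h i j k l m := by
      simp only [dot44A]
      exact neg_sum_expand _ _ _ _ _ L (fun r s => by ring)
    rw [E, dot44_G_left g hgsym hgdet R,
        dot44_G_right g hgsym hgdet R hRlast,
        dot44_G_right g hgsym hgdet (GA g) (GA_antisym g)]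
    ring
  have master42 : ∀ i j l m : Fin n,
      dot42A g (fun X Y Z W => R X Y Z W - L * GA g X Y Z W)
        (fun p q => ricciA g R p q - L * g p q) i j l m
      = dot42A g R (ricciA g R) i j l m - L * tach2A g (ricciA g R) i j l m := by
    intro i j l m
    have E : dot42A g (fun X Y Z W => R X Y Z W - L * GA g X Y Z W)
        (fun p q => ricciA g R p q - L * g p q) i j l m
        = dot42A g R (ricciA g R) i j l m
          - L * dot42A g (GA g) (ricciA g R) i j l m
          - L * dot42A g R g i j l m
          + L^2 * dot42A g (GA g) g i j l m := by
      simp only [dot42A]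
      exact neg_sum_expand _ _ _ _ _ L (fun r s => by ring)
    rw [E, dot42_G_left g hgsym hgdet (ricciA g R),
        dot42_g_right g hgsym hgdet R hRlast,
        dot42_g_right g hgsym hgdet (GA g) (GA_antisym g)]
    ring
  refine ⟨⟨fun H h i j k l m => by rw [master44, H]; ring,
          fun H h i j k l m => by
            have hz := H h i j k l m
            rw [master44] at hz; linarith⟩,
         ⟨fun H i j l m => by rw [master42, H]; ring,
          fun H i j l m => by
            have hz := H i j l m
            rw [master42] at hz; linarith⟩⟩
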